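/- arXiv:2506.10908 — 2 statements merged into one kernel-verified Lean document; each statement's English description precedes it below -/
import Mathlib

section
/- Suppose L̂^{u}(α) is a random upper confidence bound satisfying ℙ(L^{u*} ≤ L̂^{u*}(α)) ≥ 1−α at the oracle threshold u*. Define the random threshold û = min{U_i : L̂^{U_i}(α) > ε} (set û = +∞ if the set is empty, in which case û ≤ u* fails only if u* is finite; assume the sets are nonempty). Then ℙ(û ≤ u*) ≥ 1−α. -/
open MeasureTheory

theorem empirical_threshold_below_oracle_general
    {Ω : Type*} [MeasurableSpace Ω] (P : Measure Ω)
    (n : ℕ) (U : Fin n → ℝ)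
    (ε α : ℝ)
    (L : ℝ → ℝ)
    (ustar : ℝ)
    (hustar_mem : ∃ i, U i = ustar ∧ ε < L (U i))
    (Lhat : ℝ → Ω → ℝ)
    (hvalid : ENNReal.ofReal (1 - α) ≤ P {ω | L ustar ≤ Lhat ustar ω})
    (uhat : Ω → ℝ)
    (huhat_min : ∀ ω i, ε < Lhat (U i) ω → uhat ω ≤ U i) :
    ENNReal.ofReal (1 - α) ≤ P {ω | uhat ω ≤ ustar} := by
  obtain ⟨i, rfl, hε⟩ := hustar_mem
  have valid_subset : {ω | L (U i) ≤ Lhat (U i) ω} ⊆ {ω | uhat ω ≤ U i} :=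
    fun ω hω => huhat_min ω i (hε.trans_le hω)
  exact hvalid.trans (measure_mono valid_subset)

/-- If `L̂^{u*}(α)` is a valid level-`(1-α)` upper confidence bound on `L^{u*}`, then the
empirical threshold `û = min {U_i : L̂^{U_i} > ε}` satisfies `ℙ(û ≤ u*) ≥ 1-α`. -/
theorem empirical_threshold_below_oracle
    {Ω : Type*} [MeasurableSpace Ω] (P : Measure Ω) [IsProbabilityMeasure P]
    (n : ℕ) (U : Fin n → ℝ) (l : Fin n → ℝ) (hl : ∀ i, 0 ≤ l i)
    (ε α : ℝ)
    (L : ℝ → ℝ)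
    (hL : ∀ u, L u = (1 / (n : ℝ)) *
      ∑ i : Fin n, l i * (if U i ≤ u then (1 : ℝ) else 0))
    (ustar : ℝ)
    (hustar_mem : ∃ i, U i = ustar ∧ ε < L (U i))
    (hustar_min : ∀ i, ε < L (U i) → ustar ≤ U i)
    (Lhat : ℝ → Ω → ℝ)
    (hvalid : ENNReal.ofReal (1 - α) ≤ P {ω | L ustar ≤ Lhat ustar ω})
    (uhat : Ω → ℝ)
    (huhat_mem : ∀ ω, ∃ i, U i = uhat ω ∧ ε < Lhat (U i) ω)
    (huhat_min : ∀ ω i, ε < Lhat (U i) ω → uhat ω ≤ U i) :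
    ENNReal.ofReal (1 - α) ≤ P {ω | uhat ω ≤ ustar} :=
  empirical_threshold_below_oracle_general P n U ε α L ustar hustar_mem Lhat hvalid uhat huhat_min
end

section
/- Under the assumptions of the previous statements, the PAC labels Ỹ_i = Y_i 1{U_i ≥ û} + Ŷ_i 1{U_i < û} satisfy ℙ( (1/n) Σ_{i=1}^n ℓ(Y_i, Ỹ_i) ≤ ε ) ≥ 1−α. -/
/-!
On the event `L u* ≤ L̂ u*`, the score `u*` is one where `L̂` exceeds `ε`, so `û ≤ u*`.
Relabelling with threshold `û` replaces exactly the predictions with score below `û` by the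
true labels, so the remaining average loss is `L` at the largest score below `û` (or `0` if
there is none). That score lies below `u*`, the first score at which `L` exceeds `ε`.
-/

open Finset MeasureTheory

section Threshold

variable {ι : Type*} (s : Finset ι) (U f : ι → ℝ)

theorem exists_sum_filter_lt_eq_sum_filter_le {t : ℝ} (h : ∃ i ∈ s, U i < t) :
    ∃ j ∈ s, U j < t ∧ ∑ i ∈ s with U i < t, f i = ∑ i ∈ s with U i ≤ U j, f i := by
  obtain ⟨j, hj, hmax⟩ := exists_max_image (s.filter (U · < t)) U (by simpa [Finset.Nonempty])
  rw [mem_filter] at hj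
  refine ⟨j, hj.1, hj.2, congrArg (∑ i ∈ ·, f i) (filter_congr fun i hi => ?_)⟩
  exact ⟨fun hit => hmax i (mem_filter.2 ⟨hi, hit⟩), fun hij => hij.trans_lt hj.2⟩

theorem mul_sum_filter_lt_le_of_forall {c ε t : ℝ} (hε : 0 ≤ ε)
    (h : ∀ j ∈ s, U j < t → c * ∑ i ∈ s with U i ≤ U j, f i ≤ ε) :
    c * ∑ i ∈ s with U i < t, f i ≤ ε := by
  by_cases hne : ∃ i ∈ s, U i < t
  · obtain ⟨j, hj, hjt, hsum⟩ := exists_sum_filter_lt_eq_sum_filter_le s U f hne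
    exact hsum ▸ h j hj hjt
  · rw [filter_false_of_mem fun i hi hit => hne ⟨i, hi, hit⟩, sum_empty, mul_zero]
    exact hε

end Threshold

theorem sum_mul_ite_le_eq_sum_filter {ι : Type*} (s : Finset ι) (U a : ι → ℝ) (u : ℝ) :
    ∑ i ∈ s, a i * (if U i ≤ u then (1 : ℝ) else 0) = ∑ i ∈ s with U i ≤ u, a i := by
  simp only [mul_ite, mul_one, mul_zero, sum_filter]

theorem sum_loss_ite_eq_sum_filter_lt {ι β : Type*} (s : Finset ι) (loss : β → β → ℝ)
    (hloss_refl : ∀ y, loss y y = 0) (Y Yhat : ι → β) (U : ι → ℝ) (t : ℝ) :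
    ∑ i ∈ s, loss (Y i) (if t ≤ U i then Y i else Yhat i) =
      ∑ i ∈ s with U i < t, loss (Y i) (Yhat i) := by
  rw [sum_filter]
  refine sum_congr rfl fun i _ => ?_
  by_cases h : t ≤ U i
  · simp [h, hloss_refl]
  · simp [h, not_le.1 h]

theorem pac_labels_general
    {Ω : Type*} [MeasurableSpace Ω] (P : Measure Ω)
    (n : ℕ) {β : Type*} (Y Yhat : Fin n → β) (U : Fin n → ℝ)
    (loss : β → β → ℝ) (ε α : ℝ)
    (hloss_refl : ∀ y, loss y y = 0)
    (hε : 0 ≤ ε)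
    (L : ℝ → ℝ)
    (hL : ∀ u, L u = (1 / (n : ℝ)) *
      ∑ i : Fin n, loss (Y i) (Yhat i) * (if U i ≤ u then (1 : ℝ) else 0))
    (ustar : ℝ)
    (hustar_mem : ∃ i, U i = ustar ∧ ε < L (U i))
    (hustar_min : ∀ i, ε < L (U i) → ustar ≤ U i)
    (Lhat : ℝ → Ω → ℝ)
    (hvalid : ENNReal.ofReal (1 - α) ≤ P {ω | L ustar ≤ Lhat ustar ω})
    (uhat : Ω → ℝ)
    (huhat_min : ∀ ω i, ε < Lhat (U i) ω → uhat ω ≤ U i)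
    (Ytilde : Fin n → Ω → β)
    (hYtilde : ∀ i ω, Ytilde i ω = if uhat ω ≤ U i then Y i else Yhat i) :
    ENNReal.ofReal (1 - α) ≤
      P {ω | (1 / (n : ℝ)) * ∑ i : Fin n, loss (Y i) (Ytilde i ω) ≤ ε} := by
  obtain ⟨i₀, rfl, hε_lt⟩ := hustar_mem
  refine hvalid.trans (measure_mono fun ω (hω : L (U i₀) ≤ Lhat (U i₀) ω) => ?_)
  have huhat : uhat ω ≤ U i₀ := huhat_min ω i₀ (hε_lt.trans_le hω)
  show _ ≤ ε
  simp only [hYtilde, sum_loss_ite_eq_sum_filter_lt _ loss hloss_refl]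
  refine mul_sum_filter_lt_le_of_forall _ _ _ hε fun j _ hj => ?_
  rw [← sum_mul_ite_le_eq_sum_filter, ← hL]
  exact not_lt.1 fun hLj => (hustar_min j hLj).not_gt (hj.trans_le huhat)

/-- PAC labels: with probability at least `1-α`, the labels produced with the empirical
threshold `û` have average loss at most `ε`. -/
theorem pac_labels
    {Ω : Type*} [MeasurableSpace Ω] (P : Measure Ω) [IsProbabilityMeasure P]
    (n : ℕ) {β : Type*} (Y Yhat : Fin n → β) (U : Fin n → ℝ)
    (loss : β → β → ℝ) (ε α : ℝ)
    (hloss_nonneg : ∀ y y', 0 ≤ loss y y') (hloss_refl : ∀ y, loss y y = 0)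
    (hε : 0 ≤ ε)
    (L : ℝ → ℝ)
    (hL : ∀ u, L u = (1 / (n : ℝ)) *
      ∑ i : Fin n, loss (Y i) (Yhat i) * (if U i ≤ u then (1 : ℝ) else 0))
    (ustar : ℝ)
    (hustar_mem : ∃ i, U i = ustar ∧ ε < L (U i))
    (hustar_min : ∀ i, ε < L (U i) → ustar ≤ U i)
    (Lhat : ℝ → Ω → ℝ)
    (hvalid : ENNReal.ofReal (1 - α) ≤ P {ω | L ustar ≤ Lhat ustar ω})
    (uhat : Ω → ℝ)
    (huhat_mem : ∀ ω, ∃ i, U i = uhat ω ∧ ε < Lhat (U i) ω)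
    (huhat_min : ∀ ω i, ε < Lhat (U i) ω → uhat ω ≤ U i)
    (Ytilde : Fin n → Ω → β)
    (hYtilde : ∀ i ω, Ytilde i ω = if uhat ω ≤ U i then Y i else Yhat i) :
    ENNReal.ofReal (1 - α) ≤
      P {ω | (1 / (n : ℝ)) * ∑ i : Fin n, loss (Y i) (Ytilde i ω) ≤ ε} :=
  pac_labels_general P n Y Yhat U loss ε α hloss_refl hε L hL ustar hustar_mem hustar_min Lhat
    hvalid uhat huhat_min Ytilde hYtilde
end
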